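/- arXiv:2410.21084 — 5 statements merged into one kernel-verified Lean document; each statement's English description precedes it below -/
import Mathlib

section
/- Let n ≥ 3 and let S_n be the star graph with vertex set {0,1,...,n−1} and edges {0,i} for 1 ≤ i ≤ n−1. Then the monoid of partial strong endomorphisms of S_n has cardinality |PsEnd(S_n)| = 2·n^{n−1} + n·2^{n−1} − 1. -/
variable {V : Type*}

/-- Partial transformations of `V`. -/
abbrev PTrans (V : Type*) := V → Option V

/-- Monoid of partial transformations under (left-to-right) composition. -/
instance : Monoid (PTrans V) where
  mul f g := fun v => (f v).bind g
  one := fun v => some v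
  mul_assoc f g h := by
    funext v
    show ((f v).bind g).bind h = (f v).bind (fun x => (g x).bind h)
    cases f v <;> simp
  one_mul f := by funext v; rfl
  mul_one f := by
    funext v
    show (f v).bind (fun x => some x) = f v
    cases f v <;> simp

/-- Domain of a partial transformation. -/
def pdom (α : PTrans V) : Set V := {u | α u ≠ none}

/-- Image of a partial transformation. -/
def pim (α : PTrans V) : Set V := {v | ∃ u, α u = some v}

def IsPEnd (G : SimpleGraph V) (α : PTrans V) : Prop :=
  ∀ u v u' v', α u = some u' → α v = some v' → G.Adj u v → G.Adj u' v'

def IsPwEnd (G : SimpleGraph V) (α : PTrans V) : Prop :=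
  ∀ u v u' v', α u = some u' → α v = some v' → G.Adj u v → u' ≠ v' → G.Adj u' v'

def IsPsEnd (G : SimpleGraph V) (α : PTrans V) : Prop :=
  ∀ u v u' v', α u = some u' → α v = some v' → (G.Adj u v ↔ G.Adj u' v')

def IsPswEnd (G : SimpleGraph V) (α : PTrans V) : Prop :=
  ∀ u v u' v', α u = some u' → α v = some v' → ((G.Adj u v ∧ u' ≠ v') ↔ G.Adj u' v')

/-- Injectivity of a partial transformation. -/
def PInjective (α : PTrans V) : Prop :=
  ∀ u v w, α u = some w → α v = some w → u = v

open Classical in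
/-- The inverse of a partial (injective) transformation. -/
noncomputable def pinv (α : PTrans V) : PTrans V :=
  fun v => if h : ∃ u, α u = some v then some h.choose else none

/-- Partial automorphism: injective, and both it and its inverse are
partial endomorphisms. -/
def IsPAut (G : SimpleGraph V) (α : PTrans V) : Prop :=
  PInjective α ∧ IsPEnd G α ∧ IsPEnd G (pinv α)

/-- The star graph on vertices `{0,1,...,n-1}` with center `0`. -/
def starGraph (n : ℕ) : SimpleGraph (Fin n) :=
  SimpleGraph.fromRel (fun u _ => (u : ℕ) = 0)

/-!
A partial map `α` on `Fin (m + 1)` is the pair `(a, f)` of the image `a = α 0` of the centre and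
the images `f` of the `m` leaves. Leaves are pairwise non-adjacent and adjacent to the centre, so
`α` is a partial strong endomorphism iff no two leaf images are adjacent and, when `a` is defined,
every leaf image is adjacent to `a`. Hence if `a` is the centre the leaves go to leaves or nowhere
(`(m + 1) ^ m` choices); if `a` is a leaf they go to the centre or nowhere (`2 ^ m` choices, for
each of the `m` leaves); if `a` is undefined the leaf images either all avoid the centre or all
are the centre, which gives `(m + 1) ^ m + 2 ^ m - 1` choices by inclusion–exclusion.
-/

lemma Option.mem_compl_singleton_some_iff {α : Type*} [Fintype α] [DecidableEq α] (o : Option α)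
    (x : α) :
    o ∈ ({some x}ᶜ : Finset (Option α)) ↔ ∀ w, o = some w → w ≠ x := by
  cases o <;> simp

lemma Option.mem_insert_none_singleton_some_iff {α : Type*} [DecidableEq α] (o : Option α)
    (x : α) :
    o ∈ ({none, some x} : Finset (Option α)) ↔ ∀ w, o = some w → w = x := by
  cases o <;> simp

section

variable {ι β : Type*} [Fintype ι] [Fintype β]

lemma Nat.card_subtype_forall_mem (s : Finset β) :
    Nat.card {f : ι → β // ∀ i, f i ∈ s} = s.card ^ Fintype.card ι := by
  classical
  rw [Nat.card_eq_fintype_card, Fintype.card_subtype]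
  convert Fintype.card_piFinset fun _ : ι => s using 2
  · ext f; simp [Fintype.mem_piFinset]
  · simp

lemma Nat.card_subtype_forall_mem_or_forall_mem [DecidableEq β] (s t : Finset β) :
    Nat.card {f : ι → β // (∀ i, f i ∈ s) ∨ (∀ i, f i ∈ t)} =
      s.card ^ Fintype.card ι + t.card ^ Fintype.card ι - (s ∩ t).card ^ Fintype.card ι := by
  classical
  have h := Finset.card_union_add_card_inter (Fintype.piFinset fun _ : ι => s)
    (Fintype.piFinset fun _ : ι => t)
  rw [← Fintype.piFinset_inter] at h
  simp only [Fintype.card_piFinset, Finset.prod_const, Finset.card_univ] at h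
  rw [Nat.card_eq_fintype_card, Fintype.card_subtype, ← h, Nat.add_sub_cancel]
  congr 1
  ext f
  simp [Fintype.mem_piFinset]

end

variable {m : ℕ}

lemma starGraph_succ_adj (u v : Fin (m + 1)) :
    (starGraph (m + 1)).Adj u v ↔ u ≠ v ∧ (u = 0 ∨ v = 0) := by
  simp [starGraph, SimpleGraph.fromRel_adj, Fin.ext_iff, -Fin.val_eq_zero_iff]

lemma isPsEnd_starGraph_cons_iff (a : Option (Fin (m + 1))) (f : Fin m → Option (Fin (m + 1))) :
    IsPsEnd (starGraph (m + 1)) (Fin.cons a f : PTrans (Fin (m + 1))) ↔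
      (∀ i j w w', f i = some w → f j = some w' → ¬ (starGraph (m + 1)).Adj w w') ∧
      (∀ c, a = some c → ∀ i w, f i = some w → (starGraph (m + 1)).Adj c w) := by
  have leaves_not_adj (i j : Fin m) : ¬ (starGraph (m + 1)).Adj i.succ j.succ := by
    simp [starGraph_succ_adj, Fin.succ_ne_zero]
  have center_adj (i : Fin m) : (starGraph (m + 1)).Adj 0 i.succ := by
    simp [starGraph_succ_adj, (Fin.succ_ne_zero i).symm]
  constructor
  · intro h
    refine ⟨fun i j w w' hi hj => ?_, fun c hc i w hi => ?_⟩
    · exact (h i.succ j.succ w w' (by simpa using hi) (by simpa using hj)).not.mp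
        (leaves_not_adj i j)
    · exact (h 0 i.succ c w (by simpa using hc) (by simpa using hi)).mp (center_adj i)
  · rintro ⟨hleaves, hcenter⟩ u v u' v' hu hv
    induction u using Fin.cases <;> induction v using Fin.cases <;>
      simp only [Fin.cons_zero, Fin.cons_succ] at hu hv
    case zero.zero =>
      rw [hu] at hv; cases hv; simp
    case zero.succ j =>
      exact iff_of_true (center_adj j) (hcenter u' hu j v' hv)
    case succ.zero i =>
      exact iff_of_true (center_adj i).symm (hcenter v' hv i u' hu).symm
    case succ.succ i j =>
      exact iff_of_false (leaves_not_adj i j) (hleaves i j u' v' hu hv)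

lemma isPsEnd_starGraph_cons_some_zero_iff (f : Fin m → Option (Fin (m + 1))) :
    IsPsEnd (starGraph (m + 1)) (Fin.cons (some 0) f : PTrans (Fin (m + 1))) ↔
      ∀ i, f i ∈ ({some 0}ᶜ : Finset (Option (Fin (m + 1)))) := by
  simp only [isPsEnd_starGraph_cons_iff, Option.mem_compl_singleton_some_iff]
  constructor
  · rintro ⟨-, hcenter⟩ i w hi rfl
    exact (hcenter 0 rfl i 0 hi).ne rfl
  · intro hf
    refine ⟨fun i j w w' hi hj hadj => ?_, fun c hc i w hi => ?_⟩
    · rw [starGraph_succ_adj] at hadj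
      exact hadj.2.elim (hf i w hi) (hf j w' hj)
    · cases hc
      exact (starGraph_succ_adj 0 w).2 ⟨(hf i w hi).symm, Or.inl rfl⟩

lemma isPsEnd_starGraph_cons_some_succ_iff (c : Fin m) (f : Fin m → Option (Fin (m + 1))) :
    IsPsEnd (starGraph (m + 1)) (Fin.cons (some c.succ) f : PTrans (Fin (m + 1))) ↔
      ∀ i, f i ∈ ({none, some 0} : Finset (Option (Fin (m + 1)))) := by
  simp only [isPsEnd_starGraph_cons_iff, Option.mem_insert_none_singleton_some_iff]
  constructor
  · rintro ⟨-, hcenter⟩ i w hi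
    have := ((starGraph_succ_adj _ _).1 (hcenter c.succ rfl i w hi)).2
    exact this.resolve_left (Fin.succ_ne_zero c)
  · intro hf
    refine ⟨fun i j w w' hi hj hadj => ?_, fun c' hc i w hi => ?_⟩
    · rw [hf i w hi, hf j w' hj] at hadj
      exact hadj.ne rfl
    · cases hc
      rw [hf i w hi]
      exact (starGraph_succ_adj _ _).2 ⟨Fin.succ_ne_zero c, Or.inr rfl⟩

lemma isPsEnd_starGraph_cons_none_iff (f : Fin m → Option (Fin (m + 1))) :
    IsPsEnd (starGraph (m + 1)) (Fin.cons none f : PTrans (Fin (m + 1))) ↔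
      (∀ i, f i ∈ ({some 0}ᶜ : Finset (Option (Fin (m + 1))))) ∨
      (∀ i, f i ∈ ({none, some 0} : Finset (Option (Fin (m + 1))))) := by
  simp only [isPsEnd_starGraph_cons_iff, Option.mem_compl_singleton_some_iff,
    Option.mem_insert_none_singleton_some_iff, reduceCtorEq, false_imp_iff, implies_true, and_true]
  constructor
  · intro h
    by_contra! hne
    obtain ⟨⟨i, w, hi, rfl⟩, j, w', hj, hw'⟩ := hne
    exact h i j 0 w' hi hj ((starGraph_succ_adj _ _).2 ⟨hw'.symm, Or.inl rfl⟩)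
  · rintro (hf | hf) i j w w' hi hj hadj
    · rw [starGraph_succ_adj] at hadj
      exact hadj.2.elim (hf i w hi) (hf j w' hj)
    · rw [hf i w hi, hf j w' hj] at hadj
      exact hadj.ne rfl

lemma card_isPsEnd_starGraph_cons_none :
    Nat.card {f : Fin m → Option (Fin (m + 1)) //
      IsPsEnd (starGraph (m + 1)) (Fin.cons none f : PTrans (Fin (m + 1)))} =
      (m + 1) ^ m + 2 ^ m - 1 := by
  have compl_inter : ({some 0}ᶜ ∩ {none, some 0} : Finset (Option (Fin (m + 1)))) = {none} := by
    ext (_ | _) <;> simp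
  rw [Nat.card_congr (Equiv.subtypeEquivRight isPsEnd_starGraph_cons_none_iff),
    Nat.card_subtype_forall_mem_or_forall_mem, compl_inter]
  simp [Finset.card_compl]

lemma card_isPsEnd_starGraph_cons_some_zero :
    Nat.card {f : Fin m → Option (Fin (m + 1)) //
      IsPsEnd (starGraph (m + 1)) (Fin.cons (some 0) f : PTrans (Fin (m + 1)))} = (m + 1) ^ m := by
  rw [Nat.card_congr (Equiv.subtypeEquivRight isPsEnd_starGraph_cons_some_zero_iff),
    Nat.card_subtype_forall_mem]
  simp [Finset.card_compl]

lemma card_isPsEnd_starGraph_cons_some_succ (c : Fin m) :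
    Nat.card {f : Fin m → Option (Fin (m + 1)) //
      IsPsEnd (starGraph (m + 1)) (Fin.cons (some c.succ) f : PTrans (Fin (m + 1)))} = 2 ^ m := by
  rw [Nat.card_congr (Equiv.subtypeEquivRight (isPsEnd_starGraph_cons_some_succ_iff c)),
    Nat.card_subtype_forall_mem]
  simp

lemma card_isPsEnd_starGraph_succ (m : ℕ) :
    Nat.card {α : PTrans (Fin (m + 1)) // IsPsEnd (starGraph (m + 1)) α} =
      2 * (m + 1) ^ m + (m + 1) * 2 ^ m - 1 := by
  have split_center : {α : PTrans (Fin (m + 1)) // IsPsEnd (starGraph (m + 1)) α} ≃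
      Σ a, {f : Fin m → Option (Fin (m + 1)) //
        IsPsEnd (starGraph (m + 1)) (Fin.cons a f : PTrans (Fin (m + 1)))} :=
    (Equiv.subtypeEquivOfSubtype (Fin.consEquiv fun _ => Option (Fin (m + 1)))).symm.trans
      (Equiv.subtypeProdEquivSigmaSubtype fun a f => IsPsEnd _ (Fin.cons a f))
  rw [Nat.card_congr split_center, Nat.card_sigma, Fintype.sum_option, Fin.sum_univ_succ,
    card_isPsEnd_starGraph_cons_none, card_isPsEnd_starGraph_cons_some_zero]
  simp only [card_isPsEnd_starGraph_cons_some_succ, Finset.sum_const, Finset.card_univ,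
    Fintype.card_fin, smul_eq_mul]
  have hsplit := add_one_mul m (2 ^ m)
  have hpos : 1 ≤ 2 ^ m := Nat.one_le_two_pow
  omega

theorem stmt4_general (n : ℕ) :
    Nat.card {α : PTrans (Fin n) // IsPsEnd (starGraph n) α} =
      2 * n ^ (n - 1) + n * 2 ^ (n - 1) - 1 := by
  cases n with
  | zero => exact Nat.card_eq_one_iff_unique.2 ⟨inferInstance, ⟨⟨1, fun u => u.elim0⟩⟩⟩
  | succ m => simpa using card_isPsEnd_starGraph_succ m

theorem stmt4 (n : ℕ) (hn : 3 ≤ n) :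
    Nat.card {α : PTrans (Fin n) // IsPsEnd (starGraph n) α} =
      2 * n ^ (n - 1) + n * 2 ^ (n - 1) - 1 :=
  stmt4_general n
end

section
/- Let n ≥ 3 and let S_n be the star graph on vertices {0,1,...,n−1} with center 0. Then the monoid of partial strong weak endomorphisms of S_n has cardinality |PswEnd(S_n)| = 2·n^{n−1} + n·2^n − n − 1. -/
variable {V : Type*}

open Finset


section Aux
variable (n : ℕ) [NeZero n]

def Acond (α : Fin n → Option (Fin n)) : Prop :=
  ∀ i : Fin n, i ≠ 0 → α i = none ∨ α i = some 0

def Bcond (α : Fin n → Option (Fin n)) : Prop :=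
  (∀ i : Fin n, i ≠ 0 → α i ≠ some 0) ∧
  (∀ c : Fin n, α 0 = some c → c ≠ 0 → ∀ i, i ≠ 0 → ∀ x, α i = some x → x = c)

instance : DecidablePred (Acond n) := fun _ => by unfold Acond; infer_instance
instance : DecidablePred (Bcond n) := fun _ => by unfold Bcond; infer_instance

lemma star_adj (u v : Fin n) : (starGraph n).Adj u v ↔ u ≠ v ∧ (u = 0 ∨ v = 0) := by
  constructor
  · rintro ⟨h1, h2 | h2⟩
    · exact ⟨h1, Or.inl (by ext; simpa using h2)⟩
    · exact ⟨h1, Or.inr (by ext; simpa using h2)⟩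
  · rintro ⟨h1, h2 | h2⟩
    · exact ⟨h1, Or.inl (by simp [h2])⟩
    · exact ⟨h1, Or.inr (by simp [h2])⟩

variable {n}

lemma char (α : Fin n → Option (Fin n)) :
    (∀ u v u' v', α u = some u' → α v = some v' →
      (((starGraph n).Adj u v ∧ u' ≠ v') ↔ (starGraph n).Adj u' v')) ↔
    (Acond n α ∨ Bcond n α) := by
  constructor
  · intro h
    by_cases hA : Acond n α
    · exact Or.inl hA
    · right
      unfold Acond at hA
      push_neg at hA
      obtain ⟨i, hi, hinone, hix⟩ := hA
      obtain ⟨x, hx⟩ := Option.ne_none_iff_exists'.mp hinone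
      have hx0 : x ≠ 0 := fun h0 => hix (h0 ▸ hx)
      have h1 : ∀ j : Fin n, j ≠ 0 → α j ≠ some 0 := by
        intro j hj hj0
        by_cases hji : j = i
        · exact hx0 (by rw [hji, hx] at hj0; exact Option.some_inj.mp hj0)
        · have hadj := ((h j i 0 x hj0 hx).2 ((star_adj n 0 x).mpr ⟨Ne.symm hx0, Or.inl rfl⟩)).1
          rw [star_adj] at hadj
          rcases hadj.2 with h' | h'
          · exact hj h'
          · exact hi h'
      refine ⟨h1, ?_⟩
      intro c hc hc0 j hj y hy
      by_contra hyc
      have := (h 0 j c y hc hy).1 ⟨(star_adj n 0 j).mpr ⟨Ne.symm hj, Or.inl rfl⟩, fun h' => hyc h'.symm⟩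
      rw [star_adj] at this
      rcases this.2 with h' | h'
      · exact hc0 h'
      · exact h1 j hj (h' ▸ hy)
  · rintro (hA | hB) u v u' v' hu hv
    · by_cases huv : u = v
      · subst huv
        rw [hu] at hv
        simp only [Option.some_inj] at hv
        subst hv
        simp [star_adj]
      · rw [star_adj, star_adj]
        by_cases hu0 : u = 0 <;> by_cases hv0 : v = 0
        · exact absurd (hu0.trans hv0.symm) huv
        · have hv' : v' = 0 := by
            rcases hA v hv0 with h' | h' <;> rw [hv] at h' <;> simp_all
          subst hv'
          constructor
          · rintro ⟨-, hne⟩; exact ⟨hne, Or.inr rfl⟩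
          · rintro ⟨hne, -⟩; exact ⟨⟨huv, Or.inl hu0⟩, hne⟩
        · have hu' : u' = 0 := by
            rcases hA u hu0 with h' | h' <;> rw [hu] at h' <;> simp_all
          subst hu'
          constructor
          · rintro ⟨-, hne⟩; exact ⟨hne, Or.inl rfl⟩
          · rintro ⟨hne, -⟩; exact ⟨⟨huv, Or.inr hv0⟩, hne⟩
        · have hu' : u' = 0 := by
            rcases hA u hu0 with h' | h' <;> rw [hu] at h' <;> simp_all
          have hv' : v' = 0 := by
            rcases hA v hv0 with h' | h' <;> rw [hv] at h' <;> simp_all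
          subst hu'; subst hv'
          simp [huv, hu0, hv0]
    · obtain ⟨h1, h2⟩ := hB
      by_cases huv : u = v
      · subst huv
        rw [hu] at hv
        simp only [Option.some_inj] at hv
        subst hv
        simp [star_adj]
      · rw [star_adj, star_adj]
        by_cases hu0 : u = 0 <;> by_cases hv0 : v = 0
        · exact absurd (hu0.trans hv0.symm) huv
        · -- u = 0, v ≠ 0 : v' ≠ 0
          have hv' : v' ≠ 0 := fun h0 => h1 v hv0 (h0 ▸ hv)
          subst hu0
          constructor
          · rintro ⟨-, hne⟩
            refine ⟨hne, Or.inl ?_⟩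
            by_contra hu'0
            exact hne (h2 u' hu hu'0 v hv0 v' hv).symm
          · rintro ⟨hne, -⟩; exact ⟨⟨huv, Or.inl rfl⟩, hne⟩
        · have hu' : u' ≠ 0 := fun h0 => h1 u hu0 (h0 ▸ hu)
          subst hv0
          constructor
          · rintro ⟨-, hne⟩
            refine ⟨hne, Or.inr ?_⟩
            by_contra hv'0
            exact hne (h2 v' hv hv'0 u hu0 u' hu)
          · rintro ⟨hne, -⟩; exact ⟨⟨huv, Or.inr rfl⟩, hne⟩
        · have hu' : u' ≠ 0 := fun h0 => h1 u hu0 (h0 ▸ hu)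
          have hv' : v' ≠ 0 := fun h0 => h1 v hv0 (h0 ▸ hv)
          constructor
          · rintro ⟨⟨-, h' | h'⟩, -⟩
            · exact absurd h' hu0
            · exact absurd h' hv0
          · rintro ⟨-, h' | h'⟩
            · exact absurd h' hu'
            · exact absurd h' hv'

end Aux

section Count
variable (n : ℕ) [NeZero n]

lemma card_compl_zero : ({(0 : Fin n)}ᶜ : Finset (Fin n)).card = n - 1 := by
  rw [Finset.card_compl, Finset.card_singleton, Fintype.card_fin]

lemma cardA : (univ.filter (Acond n)).card = (n + 1) * 2 ^ (n - 1) := by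
  have he : univ.filter (Acond n) =
      Fintype.piFinset (fun i : Fin n =>
        if i = 0 then (univ : Finset (Option (Fin n))) else {none, some 0}) := by
    ext α
    simp only [mem_filter, mem_univ, true_and, Fintype.mem_piFinset, Acond]
    constructor
    · intro h i
      by_cases hi : i = 0
      · simp [hi]
      · rcases h i hi with h' | h' <;> simp [hi, h']
    · intro h i hi
      have := h i
      rw [if_neg hi] at this
      simpa using this
  rw [he, Fintype.card_piFinset, Fintype.prod_eq_mul_prod_compl (0 : Fin n)]
  have h2 : ∀ i ∈ ({(0:Fin n)}ᶜ : Finset (Fin n)),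
      (if i = 0 then (univ : Finset (Option (Fin n))) else {none, some 0}).card = 2 := by
    intro i hi
    rw [if_neg (by simpa using hi)]
    simp
  rw [Finset.prod_congr rfl h2, Finset.prod_const, card_compl_zero]
  simp

lemma cardAB : (univ.filter (fun α => Acond n α ∧ Bcond n α)).card = n + 1 := by
  have he : univ.filter (fun α => Acond n α ∧ Bcond n α) =
      Fintype.piFinset (fun i : Fin n =>
        if i = 0 then (univ : Finset (Option (Fin n))) else {none}) := by
    ext α
    simp only [mem_filter, mem_univ, true_and, Fintype.mem_piFinset]
    constructor
    · rintro ⟨hA, hB, -⟩ i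
      by_cases hi : i = 0
      · simp [hi]
      · rw [if_neg hi]
        rcases hA i hi with h' | h'
        · simp [h']
        · exact absurd h' (hB i hi)
    · intro h
      have hnone : ∀ i : Fin n, i ≠ 0 → α i = none := by
        intro i hi
        have := h i
        rw [if_neg hi] at this
        simpa using this
      refine ⟨fun i hi => Or.inl (hnone i hi), fun i hi => by simp [hnone i hi], ?_⟩
      intro c hc hc0 i hi x hx
      rw [hnone i hi] at hx
      exact absurd hx (by simp)
  rw [he, Fintype.card_piFinset, Fintype.prod_eq_mul_prod_compl (0 : Fin n)]
  have h2 : ∀ i ∈ ({(0:Fin n)}ᶜ : Finset (Fin n)),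
      (if i = 0 then (univ : Finset (Option (Fin n))) else {none}).card = 1 := by
    intro i hi
    rw [if_neg (by simpa using hi)]
    simp
  rw [Finset.prod_congr rfl h2, Finset.prod_const, card_compl_zero]
  simp

/-- the coordinate Finsets for the B family, indexed by the value `c` at `0`. -/
def sB (c : Option (Fin n)) (i : Fin n) : Finset (Option (Fin n)) :=
  if i = 0 then {c}
  else if c = none ∨ c = some 0 then univ.erase (some 0)
  else {none, c}

lemma card_piB (c : Option (Fin n)) :
    (Fintype.piFinset (sB n c)).card =
      if c = none ∨ c = some 0 then n ^ (n - 1) else 2 ^ (n - 1) := by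
  rw [Fintype.card_piFinset, Fintype.prod_eq_mul_prod_compl (0 : Fin n)]
  by_cases hc : c = none ∨ c = some 0
  · have h2 : ∀ i ∈ ({(0:Fin n)}ᶜ : Finset (Fin n)), (sB n c i).card = n := by
      intro i hi
      rw [sB, if_neg (by simpa using hi), if_pos hc, Finset.card_erase_of_mem (mem_univ _)]
      simp
    rw [Finset.prod_congr rfl h2, Finset.prod_const, card_compl_zero, if_pos hc]
    simp [sB]
  · have hcne : c ≠ none := fun h => hc (Or.inl h)
    obtain ⟨d, hd⟩ := Option.ne_none_iff_exists'.mp hcne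
    have h2 : ∀ i ∈ ({(0:Fin n)}ᶜ : Finset (Fin n)), (sB n c i).card = 2 := by
      intro i hi
      rw [sB, if_neg (by simpa using hi), if_neg hc, hd]
      simp
    rw [Finset.prod_congr rfl h2, Finset.prod_const, card_compl_zero, if_neg hc]
    simp [sB]

lemma cardB : (univ.filter (Bcond n)).card = 2 * n ^ (n - 1) + (n - 1) * 2 ^ (n - 1) := by
  have he : univ.filter (Bcond n) =
      (univ : Finset (Option (Fin n))).biUnion (fun c => Fintype.piFinset (sB n c)) := by
    ext α
    simp only [mem_filter, mem_univ, true_and, mem_biUnion, Fintype.mem_piFinset]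
    constructor
    · rintro ⟨h1, h2⟩
      refine ⟨α 0, fun i => ?_⟩
      by_cases hi : i = 0
      · simp [sB, hi]
      · rw [sB, if_neg hi]
        by_cases hc : α 0 = none ∨ α 0 = some 0
        · rw [if_pos hc]
          simp [h1 i hi]
        · rw [if_neg hc]
          push_neg at hc
          obtain ⟨d, hd⟩ := Option.ne_none_iff_exists'.mp hc.1
          have hd0 : d ≠ 0 := fun h => hc.2 (h ▸ hd)
          cases hax : α i with
          | none => simp
          | some x =>
            have := h2 d hd hd0 i hi x hax
            simp [this, hd]
    · rintro ⟨c, h⟩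
      have h0 : α 0 = c := by
        have := h 0
        rw [sB, if_pos rfl] at this
        simpa using this
      subst h0
      by_cases hc : α 0 = none ∨ α 0 = some 0
      · have h1 : ∀ i : Fin n, i ≠ 0 → α i ≠ some 0 := by
          intro i hi
          have := h i
          rw [sB, if_neg hi, if_pos hc] at this
          simp only [Finset.mem_erase] at this
          exact this.1
        refine ⟨h1, ?_⟩
        intro c' hc' hc'0 i hi x hx
        rcases hc with h' | h'
        · rw [h'] at hc'; exact absurd hc' (by simp)
        · rw [h'] at hc'
          exact absurd (Option.some_inj.mp hc').symm hc'0
      · push_neg at hc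
        obtain ⟨d, hd⟩ := Option.ne_none_iff_exists'.mp hc.1
        have hd0 : d ≠ 0 := fun h => hc.2 (h ▸ hd)
        have hmem : ∀ i : Fin n, i ≠ 0 → α i = none ∨ α i = some d := by
          intro i hi
          have := h i
          rw [sB, if_neg hi, if_neg (by exact fun h' => absurd h' (by push_neg; exact hc))] at this
          rw [hd] at this
          simpa using this
        constructor
        · intro i hi h0
          rcases hmem i hi with h' | h' <;> rw [h'] at h0
          · exact absurd h0 (by simp)
          · exact hd0 (Option.some_inj.mp h0)
        · intro c' hc' hc'0 i hi x hx
          have : c' = d := by rw [hd] at hc'; exact (Option.some_inj.mp hc').symm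
          subst this
          rcases hmem i hi with h' | h' <;> rw [h'] at hx
          · exact absurd hx (by simp)
          · exact (Option.some_inj.mp hx).symm
  rw [he, Finset.card_biUnion]
  · have := fun c => card_piB n c
    rw [Finset.sum_congr rfl (fun c _ => this c)]
    rw [Fintype.sum_option]
    rw [Fintype.sum_eq_add_sum_compl (0 : Fin n)]
    have hrest : ∀ i ∈ ({(0:Fin n)}ᶜ : Finset (Fin n)),
        (if (some i : Option (Fin n)) = none ∨ (some i : Option (Fin n)) = some 0
          then n ^ (n - 1) else 2 ^ (n - 1)) = 2 ^ (n - 1) := by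
      intro i hi
      rw [if_neg]
      push_neg
      exact ⟨by simp, by simpa using hi⟩
    rw [Finset.sum_congr rfl hrest, Finset.sum_const, card_compl_zero]
    simp only [eq_self_iff_true, true_or, or_true, if_true, smul_eq_mul]
    ring
  · intro c _ c' _ hcc
    apply Finset.disjoint_left.mpr
    intro α hα hα'
    rw [Fintype.mem_piFinset] at hα hα'
    have h1 := hα 0
    have h2 := hα' 0
    rw [sB, if_pos rfl] at h1 h2
    simp only [Finset.mem_singleton] at h1 h2
    exact hcc (h1 ▸ h2 ▸ rfl)

end Count


theorem stmt5 (n : ℕ) (hn : 3 ≤ n) :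
    Nat.card {α : PTrans (Fin n) // IsPswEnd (starGraph n) α} =
      2 * n ^ (n - 1) + n * 2 ^ n - n - 1 := by
  haveI : NeZero n := ⟨by omega⟩
  have hchar : ∀ α : PTrans (Fin n), IsPswEnd (starGraph n) α ↔ (Acond n α ∨ Bcond n α) := by
    intro α
    unfold IsPswEnd
    exact char α
  have h1 : Nat.card {α : PTrans (Fin n) // IsPswEnd (starGraph n) α}
      = (univ.filter (fun α : Fin n → Option (Fin n) => Acond n α ∨ Bcond n α)).card := by
    rw [Nat.card_congr (Equiv.subtypeEquivRight hchar)]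
    rw [Nat.card_eq_fintype_card, Fintype.card_subtype]
  rw [h1, Finset.filter_or]
  have hkey := Finset.card_union_add_card_inter (univ.filter (Acond n)) (univ.filter (Bcond n))
  rw [← Finset.filter_and, cardA n, cardB n, cardAB n] at hkey
  have hp : 2 ^ n = 2 * 2 ^ (n - 1) := by
    rw [← pow_succ']
    congr 1
    omega
  have hsum : (n + 1) * 2 ^ (n - 1) + (2 * n ^ (n - 1) + (n - 1) * 2 ^ (n - 1))
      = 2 * n ^ (n - 1) + n * 2 ^ n := by
    rw [hp]
    have h' : (n + 1) + (n - 1) = 2 * n := by omega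
    calc (n + 1) * 2 ^ (n - 1) + (2 * n ^ (n - 1) + (n - 1) * 2 ^ (n - 1))
        = 2 * n ^ (n - 1) + ((n + 1) + (n - 1)) * 2 ^ (n - 1) := by ring
      _ = 2 * n ^ (n - 1) + 2 * n * 2 ^ (n - 1) := by rw [h']
      _ = 2 * n ^ (n - 1) + n * (2 * 2 ^ (n - 1)) := by ring
  rw [hsum] at hkey
  have hge : n + 1 ≤ n * 2 ^ n := by
    have h8 : 8 ≤ 2 ^ n := by
      calc (8 : ℕ) = 2 ^ 3 := by norm_num
        _ ≤ 2 ^ n := Nat.pow_le_pow_right (by norm_num) hn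
    have := Nat.mul_le_mul_left n h8
    omega
  omega
end

section
/- Let n ≥ 3 and let S_n be the star graph on vertices {0,1,...,n−1} with center 0. Then the monoid of partial endomorphisms of S_n has cardinality |PEnd(S_n)| = (n+1)^{n−1} + n^{n−1} + (n−1)·2^{n−1}. -/
variable {V : Type*}

/-!
Every edge of the star contains the centre `0`, so a partial map `α` is a partial endomorphism
iff for each of the `n - 1` leaves `i` the pair `(α 0, α i)` is adjacent whenever both values are
defined. Thus `α` amounts to a value `a = α 0 : Option (Fin n)` and, independently for each leaf,
a value compatible with `a`: there are `n + 1` of them if `a` is undefined and `deg v + 1` if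
`a = v`, i.e. `n` for the centre and `2` for each of the `n - 1` leaves.
-/

open Finset

def OptAdj (G : SimpleGraph V) (a b : Option V) : Prop :=
  ∀ x ∈ a, ∀ y ∈ b, G.Adj x y

lemma OptAdj.symm {G : SimpleGraph V} {a b : Option V} (h : OptAdj G a b) : OptAdj G b a :=
  fun y hy x hx => (h x hx y hy).symm

lemma isPEnd_iff_optAdj (G : SimpleGraph V) (α : PTrans V) :
    IsPEnd G α ↔ ∀ u v, G.Adj u v → OptAdj G (α u) (α v) :=
  ⟨fun h u v huv x hx y hy => h u v x y hx hy huv, fun h u v x y hx hy huv => h u v huv x hx y hy⟩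

lemma card_subtype_optAdj_none (G : SimpleGraph V) [Fintype V] :
    Nat.card {b // OptAdj G none b} = Fintype.card V + 1 := by
  rw [Nat.card_congr (Equiv.subtypeUnivEquiv (p := OptAdj G none) fun _ _ hx => nomatch hx),
    Nat.card_eq_fintype_card, Fintype.card_option]

lemma card_subtype_optAdj_some (G : SimpleGraph V) [Fintype V] [DecidableRel G.Adj] (x : V) :
    Nat.card {b // OptAdj G (some x) b} = G.degree x + 1 := by
  classical
  rw [Nat.card_eq_fintype_card, Fintype.card_subtype, card_filter, Fintype.sum_option,
    ← SimpleGraph.card_neighborFinset_eq_degree, SimpleGraph.neighborFinset_eq_filter, card_filter]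
  simp [OptAdj, add_comm]

lemma card_subtype_forall_ne {ι β : Type*} [Fintype ι] [DecidableEq ι] [Fintype β] (c : ι)
    (R : β → β → Prop) :
    Nat.card {f : ι → β // ∀ i : {j // j ≠ c}, R (f c) (f i)} =
      ∑ a, Nat.card {b // R a b} ^ (Fintype.card ι - 1) := by
  have e : {f : ι → β // ∀ i : {j // j ≠ c}, R (f c) (f i)} ≃
      Σ a, ({j // j ≠ c} → {b // R a b}) :=
    ((Equiv.funSplitAt c β).subtypeEquiv fun _ => Iff.rfl).trans
      ((Equiv.subtypeProdEquivSigmaSubtype fun a f => ∀ i, R a (f i)).trans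
        (Equiv.sigmaCongrRight fun _ => Equiv.subtypePiEquivPi))
  rw [Nat.card_congr e, Nat.card_sigma]
  simp_rw [Nat.card_fun, Nat.card_eq_fintype_card (α := {j // j ≠ c}), Fintype.card_subtype_compl,
    Fintype.card_unique]

section starGraph

variable {n : ℕ}

instance : DecidableRel (starGraph n).Adj := fun u v =>
  inferInstanceAs (Decidable (u ≠ v ∧ ((u : ℕ) = 0 ∨ (v : ℕ) = 0)))

variable [NeZero n]

lemma starGraph_adj {u v : Fin n} : (starGraph n).Adj u v ↔ u ≠ v ∧ (u = 0 ∨ v = 0) := by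
  simp only [starGraph, SimpleGraph.fromRel_adj, Fin.val_eq_zero_iff]

lemma starGraph_degree_zero : (starGraph n).degree 0 = n - 1 := by
  have : (starGraph n).neighborFinset 0 = {0}ᶜ := by
    ext v; simp [starGraph_adj, eq_comm]
  rw [← SimpleGraph.card_neighborFinset_eq_degree, this, card_compl, card_singleton,
    Fintype.card_fin]

lemma starGraph_degree_of_ne_zero {i : Fin n} (hi : i ≠ 0) : (starGraph n).degree i = 1 := by
  have : (starGraph n).neighborFinset i = {0} := by
    ext v
    simp only [SimpleGraph.mem_neighborFinset, starGraph_adj, mem_singleton, hi, false_or,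
      and_iff_right_iff_imp]
    rintro rfl
    exact hi
  rw [← SimpleGraph.card_neighborFinset_eq_degree, this, card_singleton]

lemma isPEnd_starGraph_iff (α : PTrans (Fin n)) :
    IsPEnd (starGraph n) α ↔ ∀ i : {j // j ≠ 0}, OptAdj (starGraph n) (α 0) (α i.1) := by
  rw [isPEnd_iff_optAdj]
  refine ⟨fun h i => h 0 i (starGraph_adj.2 ⟨i.2.symm, .inl rfl⟩), fun h u v huv => ?_⟩
  obtain ⟨hne, rfl | rfl⟩ := starGraph_adj.1 huv
  · exact h ⟨v, hne.symm⟩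
  · exact (h ⟨u, hne⟩).symm

end starGraph

theorem stmt6 (n : ℕ) (hn : 3 ≤ n) :
    Nat.card {α : PTrans (Fin n) // IsPEnd (starGraph n) α} =
      (n + 1) ^ (n - 1) + n ^ (n - 1) + (n - 1) * 2 ^ (n - 1) := by
  have : NeZero n := ⟨by omega⟩
  calc Nat.card {α : PTrans (Fin n) // IsPEnd (starGraph n) α}
      = Nat.card {f : Fin n → Option (Fin n) //
          ∀ i : {j // j ≠ 0}, OptAdj (starGraph n) (f 0) (f i.1)} :=
        Nat.card_congr (Equiv.subtypeEquivRight isPEnd_starGraph_iff)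
    _ = ∑ a, Nat.card {b // OptAdj (starGraph n) a b} ^ (n - 1) := by
        rw [card_subtype_forall_ne, Fintype.card_fin]
    _ = (n + 1) ^ (n - 1) + (n ^ (n - 1) + ∑ _i ∈ ({0}ᶜ : Finset (Fin n)), 2 ^ (n - 1)) := by
        rw [Fintype.sum_option, Fintype.sum_eq_add_sum_compl 0, card_subtype_optAdj_none,
          card_subtype_optAdj_some, starGraph_degree_zero, Fintype.card_fin,
          Nat.sub_add_cancel NeZero.one_le]
        congr 2
        refine sum_congr rfl fun i hi => ?_
        rw [card_subtype_optAdj_some, starGraph_degree_of_ne_zero (by simpa using hi)]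
    _ = (n + 1) ^ (n - 1) + n ^ (n - 1) + (n - 1) * 2 ^ (n - 1) := by
        rw [sum_const, card_compl, card_singleton, Fintype.card_fin, smul_eq_mul, add_assoc]
end

section
/- Let n ≥ 3 and let S_n be the star graph on vertices {0,1,...,n−1} with center 0. Let K_0 be the set of injective partial maps α on {0,1,...,n−1} such that 0 ∉ dom(α), 0 ∈ im(α) and im(α) ∩ {1,...,n−1} ≠ ∅. Then IEnd(S_n) = PAut(S_n) ∪ K_0, and this union is disjoint. -/
variable {V : Type*}

/-! The centre `c` of the star graph lies on every edge, and the star graph has no triangles.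
If `c ∈ dom α`, an edge `{α u, α v}` of the image with `u, v` both leaves would, together
with `α c`, form a triangle, so `α` reflects adjacency. If `c ∉ dom α`, the domain spans no
edge, so `α` is trivially an endomorphism, and it reflects adjacency unless its image
contains an edge `{c, j}`, i.e. unless `α ∈ K₀`. Conversely a partial automorphism hitting
such an edge must have `c` in its domain. -/

section PartialInverse

variable {α : PTrans V}

lemma pinv_eq_some_iff (hα : PInjective α) {u v : V} : pinv α v = some u ↔ α u = some v := by
  unfold pinv
  split_ifs with h
  · rw [Option.some.injEq]
    exact ⟨fun e => e ▸ h.choose_spec, fun e => hα _ _ _ h.choose_spec e⟩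
  · exact iff_of_false not_false fun e => h ⟨u, e⟩

lemma isPEnd_pinv_iff (G : SimpleGraph V) (hα : PInjective α) :
    IsPEnd G (pinv α) ↔
      ∀ u v u' v', α u = some u' → α v = some v' → G.Adj u' v' → G.Adj u v := by
  simp only [IsPEnd, pinv_eq_some_iff hα]
  exact ⟨fun h u v u' v' hu hv => h u' v' u v hu hv, fun h u' v' u v hu hv => h u v u' v' hu hv⟩

end PartialInverse

section StarGraph

variable {n : ℕ} {c : Fin n} {α : PTrans (Fin n)}

lemma starGraph_adj_iff (hc : (c : ℕ) = 0) {u v : Fin n} :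
    (starGraph n).Adj u v ↔ u ≠ v ∧ (u = c ∨ v = c) := by
  simp [starGraph, SimpleGraph.fromRel_adj, Fin.ext_iff, hc]

lemma starGraph_cliqueFree_three (n : ℕ) : (starGraph n).CliqueFree 3 := by
  intro s hs
  obtain ⟨x, y, z, hxy, hxz, hyz, -⟩ := SimpleGraph.is3Clique_iff.1 hs
  simp only [starGraph, SimpleGraph.fromRel_adj, ne_eq, Fin.ext_iff] at hxy hxz hyz
  omega

lemma isPEnd_starGraph_of_center_notMem_pdom (hc : (c : ℕ) = 0) (h : c ∉ pdom α) :
    IsPEnd (starGraph n) α := by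
  simp only [pdom, Set.mem_ofPred_eq, not_not] at h
  intro u v u' v' hu hv huv
  rcases ((starGraph_adj_iff hc).1 huv).2 with rfl | rfl
  · simp [h] at hu
  · simp [h] at hv

lemma center_mem_pdom_of_isPAut (hc : (c : ℕ) = 0) (hα : IsPAut (starGraph n) α)
    (hc_im : c ∈ pim α) {j : Fin n} (hj : j ∈ pim α) (hjc : j ≠ c) : c ∈ pdom α := by
  obtain ⟨u, hu⟩ := hc_im
  obtain ⟨v, hv⟩ := hj
  have hcj : (starGraph n).Adj c j := (starGraph_adj_iff hc).2 ⟨hjc.symm, .inl rfl⟩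
  have huv := (isPEnd_pinv_iff _ hα.1).1 hα.2.2 u v c j hu hv hcj
  rcases ((starGraph_adj_iff hc).1 huv).2 with rfl | rfl
  · simp [pdom, hu]
  · simp [pdom, hv]

lemma isPAut_starGraph (hc : (c : ℕ) = 0) (hinj : PInjective α) (hend : IsPEnd (starGraph n) α)
    (hK : ¬(c ∉ pdom α ∧ c ∈ pim α ∧ ∃ j ∈ pim α, j ≠ c)) : IsPAut (starGraph n) α := by
  refine ⟨hinj, hend, (isPEnd_pinv_iff _ hinj).2 fun u v u' v' hu hv huv' => ?_⟩
  obtain ⟨hne', hcenter'⟩ := (starGraph_adj_iff hc).1 huv'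
  have hne : u ≠ v := by rintro rfl; exact hne' (Option.some_injective _ (hu.symm.trans hv))
  refine (starGraph_adj_iff hc).2 ⟨hne, ?_⟩
  by_cases hdom : c ∈ pdom α
  · obtain ⟨w, hw⟩ := Option.ne_none_iff_exists'.1 hdom
    by_contra! hleaves
    have hwu' := hend c u w u' hw hu ((starGraph_adj_iff hc).2 ⟨hleaves.1.symm, .inl rfl⟩)
    have hwv' := hend c v w v' hw hv ((starGraph_adj_iff hc).2 ⟨hleaves.2.symm, .inl rfl⟩)
    exact starGraph_cliqueFree_three n {w, u', v'}
      (SimpleGraph.is3Clique_triple_iff.2 ⟨hwu', hwv', huv'⟩)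
  · exfalso
    refine hK ⟨hdom, ?_⟩
    rcases hcenter' with rfl | rfl
    · exact ⟨⟨u, hu⟩, v', ⟨v, hv⟩, hne'.symm⟩
    · exact ⟨⟨v, hv⟩, u', ⟨u, hu⟩, hne'⟩

end StarGraph

theorem stmt9 (n : ℕ) (hn : 3 ≤ n) :
    {α : PTrans (Fin n) | PInjective α ∧ IsPEnd (starGraph n) α} =
      {α : PTrans (Fin n) | IsPAut (starGraph n) α} ∪
      {α : PTrans (Fin n) | PInjective α ∧ (⟨0, by omega⟩ : Fin n) ∉ pdom α ∧
        (⟨0, by omega⟩ : Fin n) ∈ pim α ∧ ∃ j ∈ pim α, j ≠ ⟨0, by omega⟩} ∧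
    Disjoint {α : PTrans (Fin n) | IsPAut (starGraph n) α}
      {α : PTrans (Fin n) | PInjective α ∧ (⟨0, by omega⟩ : Fin n) ∉ pdom α ∧
        (⟨0, by omega⟩ : Fin n) ∈ pim α ∧ ∃ j ∈ pim α, j ≠ ⟨0, by omega⟩} := by
  have hc : ((⟨0, by omega⟩ : Fin n) : ℕ) = 0 := rfl
  refine ⟨Set.ext fun α => ⟨fun ⟨hinj, hend⟩ => ?_, ?_⟩, ?_⟩
  · exact (or_iff_not_imp_right.2 (isPAut_starGraph hc hinj hend)).imp id fun hK => ⟨hinj, hK⟩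
  · rintro (⟨hinj, hend, -⟩ | ⟨hinj, hdom, -⟩)
    · exact ⟨hinj, hend⟩
    · exact ⟨hinj, isPEnd_starGraph_of_center_notMem_pdom hc hdom⟩
  · refine Set.disjoint_left.2 fun α hα ⟨_, hdom, hc_im, j, hj, hjc⟩ => ?_
    exact hdom (center_mem_pdom_of_isPAut hc hα hc_im hj hjc)
end

section
/- Let n ≥ 3, and fix k with 1 ≤ k ≤ n−1. Let B_k be the set of partial strong endomorphisms α of the star graph S_n such that {0,1,...,k} ⊆ im(α), 0 ∈ dom(α), 0α = 0, and |im(α)| ≥ 3. Let C_k be the set of partial endomorphisms α of S_n that are not partial strong endomorphisms and satisfy k = min({1,...,n−1} \ im(α)). Then |B_k| = |C_k|. -/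
variable {V : Type*}

/-!
A partial strong endomorphism `α` of the star fixing the centre `0` sends leaves to leaves, so
`α = β ∪ {0 ↦ 0}` for a partial map `β` of the leaves whose image `S` avoids `0`. A partial
endomorphism that is not strong is undefined at the centre (the star is triangle-free and its
centre is adjacent to all other vertices, which would force it to be strong), so it is a partial
map of the leaves whose image contains `0` and some leaf. Composing `β` with the transposition
`(0 k)` matches the two families: `{0, …, k} ⊆ im α` and `|im α| ≥ 3` say that `k ∈ S`, that the
leaves below `k` lie in `S` and that `S` has a second point; for `(0 k) '' S` this reads "`0` and
some leaf lie in the image, and `k` is the least missing leaf".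
-/

section PartialTransformation

variable {V : Type*} {c : V} {α : PTrans V}

lemma pim_update_of_eq_none [DecidableEq V] (hα : α c = none) (x : V) :
    pim (Function.update α c (some x)) = insert x (pim α) := by
  ext v
  simp only [pim, Set.mem_ofPred_eq, Set.mem_insert_iff, Function.update_apply]
  grind

lemma pim_map_comp (f : V → V) : pim (Option.map f ∘ α) = f '' pim α := by
  ext w
  simp only [pim, Function.comp_apply, Option.map_eq_some_iff, Set.mem_ofPred_eq, Set.mem_image]
  grind

lemma ncard_setOf_eq_none_map (σ : Equiv.Perm V) (R : Set V → Prop) :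
    {γ : PTrans V | γ c = none ∧ R (pim γ)}.ncard =
      {β : PTrans V | β c = none ∧ R (σ '' pim β)}.ncard := by
  have hpre : {β : PTrans V | β c = none ∧ R (σ '' pim β)} =
      (Option.map σ ∘ ·) ⁻¹' {γ | γ c = none ∧ R (pim γ)} := by
    ext β
    simp only [Set.mem_preimage, Set.mem_ofPred_eq, Function.comp_apply, Option.map_eq_none_iff,
      pim_map_comp]
  rw [hpre, Set.ncard_preimage_of_injective_subset_range]
  · exact fun β₁ β₂ h => funext fun i => Option.map_injective σ.injective (congrFun h i)
  · exact fun γ _ => ⟨Option.map σ.symm ∘ γ, funext fun i => by simp [Option.map_map]⟩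

end PartialTransformation

section Star

variable {V : Type*} {c : V} {α : PTrans V}

def starOn (c : V) : SimpleGraph V :=
  SimpleGraph.fromRel fun u _ => u = c

@[simp]
lemma starOn_adj {u v : V} : (starOn c).Adj u v ↔ u ≠ v ∧ (u = c ∨ v = c) :=
  SimpleGraph.fromRel_adj _ u v

lemma starOn_cliqueFree_three : (starOn c).CliqueFree 3 := by
  classical
  intro s hs
  obtain ⟨a, b, d, hab, had, hbd, -⟩ := SimpleGraph.is3Clique_iff.1 hs
  simp only [starOn_adj] at hab had hbd
  grind

/-- If `u'v'` were an edge but `uv` not, then `u'`, `v'` and the image of `c` would form a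
triangle. -/
lemma isPsEnd_of_isPEnd {G : SimpleGraph V} (hG : G.CliqueFree 3) (hc : ∀ v, v ≠ c → G.Adj c v)
    (hα : IsPEnd G α) (hdom : α c ≠ none) : IsPsEnd G α := by
  classical
  obtain ⟨d, hd⟩ := Option.ne_none_iff_exists'.1 hdom
  intro u v u' v' hu hv
  refine ⟨hα u v u' v' hu hv, fun hadj' => ?_⟩
  by_contra hadj
  have huv : u ≠ v := by
    rintro rfl
    rw [hu, Option.some_inj] at hv
    exact hadj'.ne hv
  have huc : u ≠ c := by rintro rfl; exact hadj (hc v huv.symm)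
  have hvc : v ≠ c := by rintro rfl; exact hadj (hc u huv).symm
  exact hG {d, u', v'} (SimpleGraph.is3Clique_triple_iff.2
    ⟨hα c u d u' hd hu (hc u huc), hα c v d v' hd hv (hc v hvc), hadj'⟩)

lemma isPEnd_starOn_of_eq_none (hα : α c = none) : IsPEnd (starOn c) α := by
  rintro u v u' v' hu hv ⟨-, rfl | rfl⟩ <;> simp_all

lemma isPsEnd_starOn_iff_of_eq_some (hα : α c = some c) :
    IsPsEnd (starOn c) α ↔ ∀ i, i ≠ c → α i ≠ some c := by
  refine ⟨fun hs i hi hic => ?_, fun h => ?_⟩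
  · simpa [Ne.symm hi] using hs c i c c hα hic
  · refine isPsEnd_of_isPEnd (c := c) starOn_cliqueFree_three (by simp_all [eq_comm]) ?_
      (by simp [hα])
    rintro u v u' v' hu hv ⟨huv, rfl | rfl⟩ <;> grind [starOn_adj]

lemma isPEnd_and_not_isPsEnd_starOn_iff :
    IsPEnd (starOn c) α ∧ ¬ IsPsEnd (starOn c) α ↔
      α c = none ∧ c ∈ pim α ∧ ∃ w ∈ pim α, w ≠ c := by
  constructor
  · rintro ⟨hα, hns⟩
    have h0 : α c = none := by
      by_contra h
      exact hns (isPsEnd_of_isPEnd starOn_cliqueFree_three (by simp_all [eq_comm]) hα h)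
    simp only [IsPsEnd, not_forall] at hns
    obtain ⟨u, v, u', v', hu, hv, hiff⟩ := hns
    have hadj' : (starOn c).Adj u' v' := by
      by_contra h
      exact hiff (iff_of_false (fun huv => h (hα u v u' v' hu hv huv)) h)
    obtain ⟨huv', rfl | rfl⟩ := starOn_adj.1 hadj'
    · exact ⟨h0, ⟨u, hu⟩, v', ⟨v, hv⟩, huv'.symm⟩
    · exact ⟨h0, ⟨v, hv⟩, u', ⟨u, hu⟩, huv'⟩
  · rintro ⟨h0, ⟨i, hi⟩, w, ⟨j, hj⟩, hw⟩
    refine ⟨isPEnd_starOn_of_eq_none h0, fun hs => ?_⟩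
    have hadj : (starOn c).Adj i j := (hs i j c w hi hj).2 (starOn_adj.2 ⟨hw.symm, Or.inl rfl⟩)
    obtain ⟨-, rfl | rfl⟩ := starOn_adj.1 hadj <;> simp_all

lemma ncard_setOf_isPsEnd_starOn_of_eq_some [DecidableEq V] (P : Set V → Prop) :
    {α | IsPsEnd (starOn c) α ∧ α c = some c ∧ P (pim α)}.ncard =
      {β | β c = none ∧ c ∉ pim β ∧ P (insert c (pim β))}.ncard := by
  have himage : {α | IsPsEnd (starOn c) α ∧ α c = some c ∧ P (pim α)} =
      (Function.update · c (some c)) '' {β | β c = none ∧ c ∉ pim β ∧ P (insert c (pim β))} := by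
    ext α
    constructor
    · rintro ⟨hs, h0, hP⟩
      have hα : Function.update (Function.update α c none) c (some c) = α := by
        rw [Function.update_idem, Function.update_eq_self_iff, h0]
      refine ⟨Function.update α c none, ⟨Function.update_self .., ?_, ?_⟩, hα⟩
      · rintro ⟨i, hi⟩
        by_cases hic : i = c
        · simp [hic] at hi
        · exact (isPsEnd_starOn_iff_of_eq_some h0).1 hs i hic (by simpa [hic] using hi)
      · rwa [← pim_update_of_eq_none (Function.update_self ..), hα]
    · rintro ⟨β, ⟨h0, hc, hP⟩, rfl⟩
      refine ⟨(isPsEnd_starOn_iff_of_eq_some (Function.update_self ..)).2 fun i hi => ?_,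
        Function.update_self .., ?_⟩
      · rw [Function.update_of_ne hi]
        exact fun h => hc ⟨i, h⟩
      · rwa [pim_update_of_eq_none h0]
  rw [himage, Set.InjOn.ncard_image]
  intro β₁ h₁ β₂ h₂ h
  funext i
  by_cases hic : i = c
  · rw [hic, h₁.1, h₂.1]
  · simpa [hic] using congrFun h i

end Star

lemma Nat.eq_sInf_iff_of_ne_zero {s : Set ℕ} {k : ℕ} (hk : k ≠ 0) :
    k = sInf s ↔ k ∈ s ∧ ∀ m < k, m ∉ s := by
  constructor
  · rintro rfl
    exact ⟨Nat.sInf_mem (Nat.nonempty_of_pos_sInf (Nat.pos_of_ne_zero hk)),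
      fun m => Nat.notMem_of_lt_sInf⟩
  · rintro ⟨hks, hmin⟩
    exact le_antisymm (le_csInf ⟨k, hks⟩ fun m hm => not_lt.1 fun h => hmin m h hm)
      (Nat.sInf_le hks)

section Fin

variable {n k : ℕ} {z k' : Fin n}

lemma starGraph_eq_starOn (hz : (z : ℕ) = 0) : starGraph n = starOn z := by
  ext u v
  simp [starGraph, Fin.ext_iff, hz]

lemma eq_sInf_missing_iff (hk' : (k' : ℕ) = k) (hk : 1 ≤ k) (T : Set (Fin n)) :
    k = sInf {m : ℕ | 1 ≤ m ∧ m ≤ n - 1 ∧ ∀ j ∈ T, (j : ℕ) ≠ m} ↔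
      k' ∉ T ∧ ∀ j : Fin n, 1 ≤ (j : ℕ) → (j : ℕ) < k → j ∈ T := by
  have hkn : k < n := hk' ▸ k'.isLt
  rw [Nat.eq_sInf_iff_of_ne_zero (by omega)]
  simp only [Set.mem_ofPred_eq, not_and, not_forall, not_not]
  constructor
  · rintro ⟨⟨-, -, hkT⟩, hlow⟩
    refine ⟨fun h => hkT k' h hk', fun j hj1 hjk => ?_⟩
    obtain ⟨x, hx, hxj⟩ := hlow j hjk hj1 (by omega)
    rwa [← Fin.ext hxj]
  · rintro ⟨hkT, hlow⟩
    refine ⟨⟨hk, by omega, fun j hj hjk => hkT (Fin.ext (hjk.trans hk'.symm) ▸ hj)⟩,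
      fun m hmk hm1 _ => ⟨⟨m, by omega⟩, hlow _ hm1 hmk, rfl⟩⟩

lemma leafImage_iff_swap_image (hz : (z : ℕ) = 0) (hk' : (k' : ℕ) = k) (hk : 1 ≤ k)
    (S : Set (Fin n)) :
    (z ∉ S ∧ (∀ j : Fin n, (j : ℕ) ≤ k → j ∈ insert z S) ∧ 3 ≤ (insert z S).ncard) ↔
      (z ∈ Equiv.swap z k' '' S ∧ (∃ w ∈ Equiv.swap z k' '' S, w ≠ z) ∧
        k = sInf {m : ℕ | 1 ≤ m ∧ m ≤ n - 1 ∧ ∀ j ∈ Equiv.swap z k' '' S, (j : ℕ) ≠ m}) := by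
  have hzk : z ≠ k' := fun h => by rw [← h] at hk'; omega
  have hmem : ∀ x, x ∈ Equiv.swap z k' '' S ↔ Equiv.swap z k' x ∈ S := fun x => by
    rw [Set.mem_image_equiv, Equiv.symm_swap]
  have hlow : (∀ j : Fin n, 1 ≤ (j : ℕ) → (j : ℕ) < k → j ∈ Equiv.swap z k' '' S) ↔
      ∀ j : Fin n, 1 ≤ (j : ℕ) → (j : ℕ) < k → j ∈ S := by
    refine forall_congr' fun j => imp_congr_right fun h1 => imp_congr_right fun h2 => ?_
    rw [hmem, Equiv.swap_apply_of_ne_of_ne (by rintro rfl; omega) (by rintro rfl; omega)]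
  have hex : (∃ w ∈ Equiv.swap z k' '' S, w ≠ z) ↔ ∃ w ∈ S, w ≠ k' := by
    simp only [Set.exists_mem_image, Ne, Equiv.swap_apply_eq_iff, Equiv.swap_apply_left]
  have hall : (∀ j : Fin n, (j : ℕ) ≤ k → j ∈ insert z S) ↔
      k' ∈ S ∧ ∀ j : Fin n, 1 ≤ (j : ℕ) → (j : ℕ) < k → j ∈ S := by
    constructor
    · intro h
      exact ⟨(h k' hk'.le).resolve_left hzk.symm,
        fun j h1 h2 => (h j h2.le).resolve_left (by rintro rfl; omega)⟩
    · rintro ⟨hk'S, hS⟩ j hj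
      rcases Nat.eq_zero_or_pos j with h0 | h0
      · exact Or.inl (Fin.ext (h0.trans hz.symm))
      · rcases hj.lt_or_eq with hjk | hjk
        · exact Or.inr (hS j h0 hjk)
        · exact Or.inr (Fin.ext (hjk.trans hk'.symm) ▸ hk'S)
  have hcard (hzS : z ∉ S) (hk'S : k' ∈ S) : 3 ≤ (insert z S).ncard ↔ ∃ w ∈ S, w ≠ k' := by
    rw [Set.ncard_insert_of_notMem hzS]
    refine ⟨fun h => Set.exists_ne_of_one_lt_ncard (by omega) k', fun ⟨w, hw, hwk⟩ => ?_⟩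
    have := (Set.one_lt_ncard S.toFinite).2 ⟨w, hw, k', hk'S, hwk⟩
    omega
  rw [eq_sInf_missing_iff hk' hk, hmem, hmem, Equiv.swap_apply_left, Equiv.swap_apply_right, hex,
    hall, hlow]
  constructor
  · rintro ⟨hzS, ⟨hk'S, hS⟩, h3⟩
    exact ⟨hk'S, (hcard hzS hk'S).1 h3, hzS, hS⟩
  · rintro ⟨hk'S, hw, hzS, hS⟩
    exact ⟨hzS, ⟨hk'S, hS⟩, (hcard hzS hk'S).2 hw⟩

end Fin

theorem stmt15 (n k : ℕ) (hk1 : 1 ≤ k) (hk2 : k ≤ n - 1) :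
    Set.ncard {α : PTrans (Fin n) | IsPsEnd (starGraph n) α ∧
        (∀ j : Fin n, (j : ℕ) ≤ k → j ∈ pim α) ∧
        α ⟨0, by omega⟩ = some ⟨0, by omega⟩ ∧ 3 ≤ (pim α).ncard} =
    Set.ncard {α : PTrans (Fin n) | IsPEnd (starGraph n) α ∧ ¬ IsPsEnd (starGraph n) α ∧
        k = sInf {m : ℕ | 1 ≤ m ∧ m ≤ n - 1 ∧ ∀ j ∈ pim α, (j : ℕ) ≠ m}} := by
  set z : Fin n := ⟨0, by omega⟩
  set k' : Fin n := ⟨k, by omega⟩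
  set σ := Equiv.swap z k'
  let P : Set (Fin n) → Prop := fun T => (∀ j : Fin n, (j : ℕ) ≤ k → j ∈ T) ∧ 3 ≤ T.ncard
  let R : Set (Fin n) → Prop := fun T =>
    z ∈ T ∧ (∃ w ∈ T, w ≠ z) ∧ k = sInf {m : ℕ | 1 ≤ m ∧ m ≤ n - 1 ∧ ∀ j ∈ T, (j : ℕ) ≠ m}
  rw [starGraph_eq_starOn (z := z) rfl]
  calc _ = {α | IsPsEnd (starOn z) α ∧ α z = some z ∧ P (pim α)}.ncard := by
        congr 1
        ext α
        simp only [P, Set.mem_ofPred_eq]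
        tauto
    _ = {β | β z = none ∧ z ∉ pim β ∧ P (insert z (pim β))}.ncard :=
        ncard_setOf_isPsEnd_starOn_of_eq_some P
    _ = {β | β z = none ∧ R (σ '' pim β)}.ncard := by
        congr 1
        ext β
        exact and_congr_right fun _ => leafImage_iff_swap_image (k' := k') rfl rfl hk1 (pim β)
    _ = {γ | γ z = none ∧ R (pim γ)}.ncard := (ncard_setOf_eq_none_map σ R).symm
    _ = _ := by
        congr 1
        ext γ
        rw [Set.mem_ofPred_eq, Set.mem_ofPred_eq, ← and_assoc (a := IsPEnd _ γ),
          isPEnd_and_not_isPsEnd_starOn_iff]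
        simp only [R, and_assoc]
end
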